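/- arXiv:2604.08939 — 4 statements merged into one kernel-verified Lean document; each statement's English description precedes it below -/
import Mathlib

section
/- Let σ_1 ≥ σ_2 ≥ ... ≥ σ_r > 0 be real numbers with r ≥ 1. Let α_{i,1} ≥ α_{i,2} ≥ ... ≥ α_{i,r} ≥ 0 and 0 ≤ α_{j,1} ≤ α_{j,2} ≤ ... ≤ α_{j,r} be real numbers, and assume Σ_{k=1}^r σ_k α_{j,k} > 0. Then (Σ_{k=1}^r σ_k α_{i,k}) / (Σ_{k=1}^r σ_k α_{j,k}) ≥ (Σ_{k=1}^r α_{i,k}) / (Σ_{k=1}^r α_{j,k}). -/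
/-- Ratio balancing: for positive decreasing `σ`, a "strong" task `α_i`
(nonnegative, decreasing) and a "weak" task `α_j` (nonnegative, increasing)
with `Σ σ_k α_{j,k} > 0`, the contribution ratio under the raw weights `σ` is
at least the unweighted contribution ratio. -/
theorem ratio_balance {r : ℕ} (hr : 1 ≤ r)
    (σ : Fin r → ℝ) (hσanti : Antitone σ) (hσpos : ∀ k, 0 < σ k)
    (αi αj : Fin r → ℝ)
    (hαi_anti : Antitone αi) (hαi_nonneg : ∀ k, 0 ≤ αi k)
    (hαj_mono : Monotone αj) (hαj_nonneg : ∀ k, 0 ≤ αj k)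
    (hpos : 0 < ∑ k, σ k * αj k) :
    (∑ k, σ k * αi k) / (∑ k, σ k * αj k) ≥
      (∑ k, αi k) / (∑ k, αj k) := by
  -- pointwise pair inequality
  have key : ∀ k l : Fin r,
      αi k * (σ l * αj l) + αi l * (σ k * αj k) ≤
        σ k * αi k * αj l + σ l * αi l * αj k := by
    intro k l
    rcases le_total k l with h | h
    · have hσ := hσanti h
      have hi := hαi_anti h
      have hj := hαj_mono h
      have hcross : αi l * αj k ≤ αi k * αj l := by
        nlinarith [mul_nonneg (sub_nonneg.2 hi) (hαj_nonneg l),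
          mul_nonneg (hαi_nonneg l) (sub_nonneg.2 hj)]
      nlinarith [mul_nonneg (sub_nonneg.2 hσ) (sub_nonneg.2 hcross)]
    · have hσ := hσanti h
      have hi := hαi_anti h
      have hj := hαj_mono h
      have hcross : αi k * αj l ≤ αi l * αj k := by
        nlinarith [mul_nonneg (sub_nonneg.2 hi) (hαj_nonneg k),
          mul_nonneg (hαi_nonneg k) (sub_nonneg.2 hj)]
      nlinarith [mul_nonneg (sub_nonneg.2 hσ) (sub_nonneg.2 hcross)]
  -- cross-product inequality
  have cross : (∑ k, αi k) * (∑ k, σ k * αj k) ≤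
      (∑ k, σ k * αi k) * (∑ k, αj k) := by
    have h2 : (∑ k, ∑ l, (αi k * (σ l * αj l) + αi l * (σ k * αj k)))
        ≤ (∑ k, ∑ l, (σ k * αi k * αj l + σ l * αi l * αj k)) := by
      apply Finset.sum_le_sum
      intro k _
      exact Finset.sum_le_sum fun l _ => key k l
    have e1 : (∑ k, ∑ l, (αi k * (σ l * αj l) + αi l * (σ k * αj k)))
        = 2 * ((∑ k, αi k) * (∑ k, σ k * αj k)) := by
      simp only [Finset.sum_add_distrib, ← Finset.sum_mul, ← Finset.mul_sum]
      ring
    have e2 : (∑ k, ∑ l, (σ k * αi k * αj l + σ l * αi l * αj k))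
        = 2 * ((∑ k, σ k * αi k) * (∑ k, αj k)) := by
      simp only [Finset.sum_add_distrib, ← Finset.sum_mul, ← Finset.mul_sum]
      ring
    rw [e1, e2] at h2
    linarith
  have hj_pos : 0 < ∑ k, αj k := by
    rcases (Finset.sum_nonneg fun k _ => hαj_nonneg k : (0:ℝ) ≤ ∑ k, αj k).lt_or_eq with h | h
    · exact h
    · exfalso
      have hall : ∀ k ∈ Finset.univ, αj k = 0 :=
        (Finset.sum_eq_zero_iff_of_nonneg fun k _ => hαj_nonneg k).mp h.symm
      have : (∑ k, σ k * αj k) = 0 := by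
        apply Finset.sum_eq_zero
        intro k hk
        rw [hall k hk, mul_zero]
      linarith
  rw [ge_iff_le, div_le_div_iff₀ hj_pos hpos]
  linarith
end

section
/- Let u_1, ..., u_r be an orthonormal family in ℝ^m and v_1, ..., v_r an orthonormal family in ℝ^n, and set E_k = u_k v_kᵀ. Let G = Σ_{k=1}^r σ_k E_k with σ_1 ≥ σ_2 ≥ ... ≥ σ_r > 0, and let O = Σ_{k=1}^r E_k. Let g_i and g_j be real m×n matrices with coefficients α_{i,k} = ⟨g_i, E_k⟩_F and α_{j,k} = ⟨g_j, E_k⟩_F satisfying α_{i,1} ≥ α_{i,2} ≥ ... ≥ α_{i,r} ≥ 0 and 0 ≤ α_{j,1} ≤ α_{j,2} ≤ ... ≤ α_{j,r}. Define the projections P_i(A) = ⟨A, g_i⟩_F and P_j(A) = ⟨A, g_j⟩_F, and assume P_j(G) > 0. Then P_i(G) / P_j(G) ≥ P_i(O) / P_j(O). -/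
open Matrix

lemma chebyshev_like {r : ℕ} (σ a b : Fin r → ℝ) (hσ : Antitone σ)
    (ha : Antitone a) (ha0 : ∀ k, 0 ≤ a k) (hb : Monotone b) (hb0 : ∀ k, 0 ≤ b k) :
    (∑ k, a k) * (∑ k, σ k * b k) ≤ (∑ k, σ k * a k) * (∑ k, b k) := by
  have key : 0 ≤ ∑ k, ∑ l, (σ k - σ l) * (a k * b l - a l * b k) := by
    refine Finset.sum_nonneg fun k _ => Finset.sum_nonneg fun l _ => ?_
    rcases le_total k l with h | h
    · exact mul_nonneg (sub_nonneg.2 (hσ h))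
        (sub_nonneg.2 (mul_le_mul (ha h) (hb h) (hb0 k) (ha0 k)))
    · have h1 := sub_nonpos.2 (hσ h)
      have h2 := sub_nonpos.2 (mul_le_mul (ha h) (hb h) (hb0 l) (ha0 l))
      nlinarith
  have expand : ∑ k, ∑ l, (σ k - σ l) * (a k * b l - a l * b k)
      = 2 * ((∑ k, σ k * a k) * (∑ k, b k) - (∑ k, a k) * (∑ k, σ k * b k)) := by
    have h1 : ∑ k : Fin r, ∑ l : Fin r, σ k * (a k * b l)
        = (∑ k, σ k * a k) * (∑ k, b k) := by
      rw [Finset.sum_mul_sum]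
      exact Finset.sum_congr rfl fun k _ => Finset.sum_congr rfl fun l _ => by ring
    have h2 : ∑ k : Fin r, ∑ l : Fin r, σ l * (a k * b l)
        = (∑ k, a k) * (∑ k, σ k * b k) := by
      rw [Finset.sum_mul_sum]
      exact Finset.sum_congr rfl fun k _ => Finset.sum_congr rfl fun l _ => by ring
    have h3 : ∑ k : Fin r, ∑ l : Fin r, σ k * (a l * b k)
        = (∑ k, a k) * (∑ k, σ k * b k) := by
      rw [Finset.sum_comm]
      rw [Finset.sum_mul_sum]
      exact Finset.sum_congr rfl fun k _ => Finset.sum_congr rfl fun l _ => by ring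
    have h4 : ∑ k : Fin r, ∑ l : Fin r, σ l * (a l * b k)
        = (∑ k, σ k * a k) * (∑ k, b k) := by
      rw [Finset.sum_comm]
      rw [Finset.sum_mul_sum]
      exact Finset.sum_congr rfl fun k _ => Finset.sum_congr rfl fun l _ => by ring
    calc ∑ k, ∑ l, (σ k - σ l) * (a k * b l - a l * b k)
        = ∑ k : Fin r, ∑ l : Fin r, (σ k * (a k * b l) - σ k * (a l * b k)
            - σ l * (a k * b l) + σ l * (a l * b k)) := by
          refine Finset.sum_congr rfl fun k _ => Finset.sum_congr rfl fun l _ => by ring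
      _ = _ := by
          simp only [Finset.sum_add_distrib, Finset.sum_sub_distrib, h1, h2, h3, h4]
          ring
  linarith

/-- Muon as an implicit multi-task balancer: with `G = Σ σ_k u_k v_kᵀ` the SVD
of the gradient (orthonormal `u_k`, `v_k`, positive decreasing `σ_k`) and
`O = Σ u_k v_kᵀ` its orthogonalization, for a strong task `g_i` (Frobenius
projection coefficients onto the `E_k` decreasing and nonnegative) and a weak
task `g_j` (coefficients increasing and nonnegative) with `P_j(G) > 0`, the
ratio of task projections is more balanced for `O` than for `G`:
`P_i(G)/P_j(G) ≥ P_i(O)/P_j(O)` where `P_i(A) = ⟨A, g_i⟩_F = trace (Aᵀ g_i)`. -/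
theorem muon_balances_tasks {m n r : ℕ} (hr : 1 ≤ r)
    (u : Fin r → Fin m → ℝ) (v : Fin r → Fin n → ℝ)
    (hu : ∀ k l : Fin r, ∑ a, u k a * u l a = if k = l then (1 : ℝ) else 0)
    (hv : ∀ k l : Fin r, ∑ b, v k b * v l b = if k = l then (1 : ℝ) else 0)
    (E : Fin r → Matrix (Fin m) (Fin n) ℝ)
    (hE : ∀ k, E k = Matrix.of fun a b => u k a * v k b)
    (σ : Fin r → ℝ) (hσanti : Antitone σ) (hσpos : ∀ k, 0 < σ k)
    (G O gi gj : Matrix (Fin m) (Fin n) ℝ)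
    (hG : G = ∑ k, σ k • E k)
    (hO : O = ∑ k, E k)
    (αi αj : Fin r → ℝ)
    (hαi : ∀ k, αi k = Matrix.trace (giᵀ * E k))
    (hαj : ∀ k, αj k = Matrix.trace (gjᵀ * E k))
    (hαi_anti : Antitone αi) (hαi_nonneg : ∀ k, 0 ≤ αi k)
    (hαj_mono : Monotone αj) (hαj_nonneg : ∀ k, 0 ≤ αj k)
    (hpos : 0 < Matrix.trace (Gᵀ * gj)) :
    Matrix.trace (Gᵀ * gi) / Matrix.trace (Gᵀ * gj) ≥
      Matrix.trace (Oᵀ * gi) / Matrix.trace (Oᵀ * gj) := by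
  -- rewrite traces
  have flip : ∀ (g : Matrix (Fin m) (Fin n) ℝ) k,
      Matrix.trace ((E k)ᵀ * g) = Matrix.trace (gᵀ * E k) := by
    intro g k
    rw [← Matrix.trace_transpose (gᵀ * E k), Matrix.transpose_mul, Matrix.transpose_transpose]
  have hGtr : ∀ (g : Matrix (Fin m) (Fin n) ℝ),
      Matrix.trace (Gᵀ * g) = ∑ k, σ k * Matrix.trace (gᵀ * E k) := by
    intro g
    simp [hG, Matrix.transpose_sum, Matrix.sum_mul, Matrix.trace_sum, flip,
      smul_mul_assoc, Matrix.trace_smul, smul_eq_mul]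
  have hOtr : ∀ (g : Matrix (Fin m) (Fin n) ℝ),
      Matrix.trace (Oᵀ * g) = ∑ k, Matrix.trace (gᵀ * E k) := by
    intro g
    simp [hO, Matrix.transpose_sum, Matrix.sum_mul, Matrix.trace_sum, flip]
  have hGi : Matrix.trace (Gᵀ * gi) = ∑ k, σ k * αi k := by
    rw [hGtr]; exact Finset.sum_congr rfl fun k _ => by rw [hαi]
  have hGj : Matrix.trace (Gᵀ * gj) = ∑ k, σ k * αj k := by
    rw [hGtr]; exact Finset.sum_congr rfl fun k _ => by rw [hαj]
  have hOi : Matrix.trace (Oᵀ * gi) = ∑ k, αi k := by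
    rw [hOtr]; exact Finset.sum_congr rfl fun k _ => (hαi k).symm
  have hOj : Matrix.trace (Oᵀ * gj) = ∑ k, αj k := by
    rw [hOtr]; exact Finset.sum_congr rfl fun k _ => (hαj k).symm
  rw [hGi, hGj, hOi, hOj]
  rw [hGj] at hpos
  rcases eq_or_lt_of_le (Finset.sum_nonneg fun k _ => hαj_nonneg k :
      (0:ℝ) ≤ ∑ k, αj k) with h0 | h0
  · rw [← h0, div_zero]
    exact div_nonneg (Finset.sum_nonneg fun k _ => mul_nonneg (hσpos k).le (hαi_nonneg k))
      hpos.le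
  · rw [ge_iff_le, div_le_div_iff₀ h0 hpos]
    exact chebyshev_like σ αi αj hσanti hαi_anti hαi_nonneg hαj_mono hαj_nonneg
end

section
/- (Tracking Error Upper Bound) Let (G_t)_{t≥0} and (m_t)_{t≥0} be sequences in ℝ^d with m_t = β_t m_{t-1} + (1 - β_t) G_t for all t ≥ 1, where β_t ∈ [0, β_max] for all t and 0 < β_max < 1, and define the tracking error δ_t = m_t - G_t. Assume the gradients are bounded: there is M > 0 with ‖G_t‖ ≤ M for all t ≥ 0, and ‖m_0‖ ≤ M. Then with C = 2/(1-β_max)², limsup_{T→∞} (1/T) Σ_{t=1}^T ‖δ_t‖² ≤ C · limsup_{T→∞} (1/T) Σ_{t=1}^T β_t² ‖G_t - G_{t-1}‖². -/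
/-!
Subtracting `G_{t+1}` from the momentum update gives `δ_{t+1} = β_{t+1} (δ_t - (G_{t+1} - G_t))`.
The weighted Young inequality with weights `β_max` and `1 - β_max` turns this into the
contraction `‖δ_{t+1}‖² ≤ β_max ‖δ_t‖² + β_{t+1}² ‖G_{t+1} - G_t‖² / (1 - β_max)`.
Summing over `t < T` and absorbing `β_max Σ ‖δ_t‖²` into the left-hand side bounds
`Σ_{t=1}^T ‖δ_t‖²` by a constant plus `(1 - β_max)⁻² Σ_{t=1}^T β_t² ‖G_t - G_{t-1}‖²`;
after dividing by `T` the constant disappears in the limsup.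
-/

open Filter Finset Topology

theorem smul_add_one_sub_smul_sub {E : Type*} [AddCommGroup E] [Module ℝ E] (β : ℝ) (m g g' : E) :
    β • m + (1 - β) • g' - g' = β • (m - g - (g' - g)) := by
  module

theorem mul_add_sq_le {β b p q : ℝ} (hβ0 : 0 ≤ β) (hβb : β ≤ b) (hb0 : 0 < b) (hb1 : b < 1) :
    (β * (p + q)) ^ 2 ≤ b * p ^ 2 + (1 - b)⁻¹ * (β ^ 2 * q ^ 2) := by
  have h1b : 0 < 1 - b := by linarith
  rw [← sub_nonneg]
  have key : b * p ^ 2 + (1 - b)⁻¹ * (β ^ 2 * q ^ 2) - (β * (p + q)) ^ 2 =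
      ((1 - b) * (b ^ 2 - β ^ 2) * p ^ 2 + β ^ 2 * ((1 - b) * p - b * q) ^ 2) / (b * (1 - b)) := by
    field_simp; ring
  have hβsq : 0 ≤ b ^ 2 - β ^ 2 := by nlinarith
  rw [key]
  positivity

theorem norm_smul_sub_sq_le {E : Type*} [SeminormedAddCommGroup E] [NormedSpace ℝ E] (u v : E)
    {β b : ℝ} (hβ0 : 0 ≤ β) (hβb : β ≤ b) (hb0 : 0 < b) (hb1 : b < 1) :
    ‖β • (u - v)‖ ^ 2 ≤ b * ‖u‖ ^ 2 + (1 - b)⁻¹ * (β ^ 2 * ‖v‖ ^ 2) :=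
  calc ‖β • (u - v)‖ ^ 2 ≤ (β * (‖u‖ + ‖v‖)) ^ 2 := by
        rw [norm_smul, Real.norm_of_nonneg hβ0]
        gcongr
        exact norm_sub_le u v
    _ ≤ _ := mul_add_sq_le hβ0 hβb hb0 hb1

noncomputable def timeAverage (f : ℕ → ℝ) (T : ℕ) : ℝ :=
  (1 / (T : ℝ)) * ∑ t ∈ Icc 1 T, f t

theorem timeAverage_nonneg {f : ℕ → ℝ} (hf : ∀ t, 0 ≤ f t) (T : ℕ) : 0 ≤ timeAverage f T :=
  mul_nonneg (by positivity) (sum_nonneg fun t _ => hf t)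

theorem timeAverage_le {f : ℕ → ℝ} {K : ℝ} (hf : ∀ t, f t ≤ K) (hK : 0 ≤ K) (T : ℕ) :
    timeAverage f T ≤ K := by
  rcases Nat.eq_zero_or_pos T with rfl | hT
  · simpa [timeAverage] using hK
  have hsum : ∑ t ∈ Icc 1 T, f t ≤ T * K := by
    simpa using sum_le_card_nsmul (Icc 1 T) f K fun t _ => hf t
  calc timeAverage f T ≤ (1 / (T : ℝ)) * (T * K) := by
        unfold timeAverage; gcongr
    _ = K := by field_simp

theorem sum_Icc_le_of_le_mul_add {x c : ℕ → ℝ} {b : ℝ} (h : ∀ t, x (t + 1) ≤ b * x t + c (t + 1))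
    (T : ℕ) : (1 - b) * ∑ t ∈ Icc 1 T, x t + b * x T ≤ b * x 0 + ∑ t ∈ Icc 1 T, c t := by
  induction T with
  | zero => simp
  | succ T ih =>
    rw [sum_Icc_succ_top (by omega), sum_Icc_succ_top (by omega)]
    linarith [h T]

theorem timeAverage_le_of_le_mul_add {x c : ℕ → ℝ} {b L : ℝ} (hb0 : 0 ≤ b) (hb1 : b < 1)
    (hx : ∀ t, 0 ≤ x t) (h : ∀ t, x (t + 1) ≤ b * x t + L * c (t + 1)) (T : ℕ) :
    timeAverage x T ≤ b * x 0 / (1 - b) * (1 / (T : ℝ)) + L / (1 - b) * timeAverage c T := by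
  have h1b : 0 < 1 - b := by linarith
  have hsum : (1 - b) * ∑ t ∈ Icc 1 T, x t ≤ b * x 0 + L * ∑ t ∈ Icc 1 T, c t := by
    have := sum_Icc_le_of_le_mul_add (c := fun t => L * c t) h T
    rw [← mul_sum] at this
    linarith [mul_nonneg hb0 (hx T)]
  have hsum' : ∑ t ∈ Icc 1 T, x t ≤ b * x 0 / (1 - b) + L / (1 - b) * ∑ t ∈ Icc 1 T, c t := by
    rw [div_mul_eq_mul_div, ← add_div, le_div_iff₀ h1b]
    linarith
  calc timeAverage x T
      ≤ (1 / (T : ℝ)) * (b * x 0 / (1 - b) + L / (1 - b) * ∑ t ∈ Icc 1 T, c t) := by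
        unfold timeAverage; gcongr
    _ = _ := by unfold timeAverage; ring

theorem limsup_le_mul_limsup_of_le_add {ι : Type*} {l : Filter ι} [l.NeBot] {a b u : ι → ℝ}
    {L : ℝ} (hL : 0 ≤ L) (hu : Tendsto u l (𝓝 0)) (ha : IsBoundedUnder (· ≥ ·) l a)
    (hb : IsBoundedUnder (· ≤ ·) l b) (hb' : IsBoundedUnder (· ≥ ·) l b)
    (h : ∀ᶠ i in l, a i ≤ u i + L * b i) : limsup a l ≤ L * limsup b l := by
  have hmono : Monotone (L * ·) := fun _ _ hxy => mul_le_mul_of_nonneg_left hxy hL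
  have hLb : L * limsup b l = limsup (fun i => L * b i) l :=
    hmono.map_limsup_of_continuousAt b (continuous_const_mul L).continuousAt hb
      hb'.isCoboundedUnder_le
  calc limsup a l ≤ limsup (u + fun i => L * b i) l :=
        limsup_le_limsup h ha.isCoboundedUnder_le
          (isBoundedUnder_le_add hu.isBoundedUnder_le (hmono.isBoundedUnder_le_comp hb))
    _ ≤ limsup u l + limsup (fun i => L * b i) l :=
        limsup_add_le hu.isBoundedUnder_ge hu.isBoundedUnder_le
          (hmono.isBoundedUnder_ge_comp hb').isCoboundedUnder_le (hmono.isBoundedUnder_le_comp hb)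
    _ = L * limsup b l := by rw [hu.limsup_eq, zero_add, hLb]

theorem limsup_timeAverage_le_of_le_mul_add {x c : ℕ → ℝ} {b L K : ℝ} (hb0 : 0 ≤ b)
    (hb1 : b < 1) (hL : 0 ≤ L) (hx : ∀ t, 0 ≤ x t) (hc0 : ∀ t, 0 ≤ c t) (hcK : ∀ t, c t ≤ K)
    (h : ∀ t, x (t + 1) ≤ b * x t + L * c (t + 1)) :
    limsup (timeAverage x) atTop ≤ L / (1 - b) * limsup (timeAverage c) atTop := by
  have hK : 0 ≤ K := (hc0 0).trans (hcK 0)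
  refine limsup_le_mul_limsup_of_le_add (div_nonneg hL (by linarith))
    (by simpa using tendsto_one_div_atTop_nhds_zero_nat.const_mul (b * x 0 / (1 - b)))
    (isBoundedUnder_of ⟨0, timeAverage_nonneg hx⟩)
    (isBoundedUnder_of ⟨K, timeAverage_le hcK hK⟩)
    (isBoundedUnder_of ⟨0, timeAverage_nonneg hc0⟩)
    (Eventually.of_forall (timeAverage_le_of_le_mul_add hb0 hb1 hx h))

theorem tracking_error_upper_bound_general {d : ℕ}
    (G m δ : ℕ → EuclideanSpace ℝ (Fin d)) (β : ℕ → ℝ) (βmax : ℝ)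
    (hβmax0 : 0 < βmax) (hβmax1 : βmax < 1)
    (hβ : ∀ t : ℕ, β t ∈ Set.Icc (0 : ℝ) βmax)
    (hrec : ∀ t : ℕ, m (t + 1) = β (t + 1) • m t + (1 - β (t + 1)) • G (t + 1))
    (hδ : ∀ t : ℕ, δ t = m t - G t)
    (M : ℝ) (hG : ∀ t : ℕ, ‖G t‖ ≤ M) :
    limsup (fun T : ℕ => (1 / (T : ℝ)) * ∑ t ∈ Finset.Icc 1 T, ‖δ t‖ ^ 2) atTop ≤
      (2 / (1 - βmax) ^ 2) *
        limsup (fun T : ℕ =>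
          (1 / (T : ℝ)) * ∑ t ∈ Finset.Icc 1 T, (β t) ^ 2 * ‖G t - G (t - 1)‖ ^ 2) atTop := by
  set c : ℕ → ℝ := fun t => β t ^ 2 * ‖G t - G (t - 1)‖ ^ 2
  have h1b : 0 < 1 - βmax := by linarith
  have hstep (t : ℕ) :
      ‖δ (t + 1)‖ ^ 2 ≤ βmax * ‖δ t‖ ^ 2 + (1 - βmax)⁻¹ * c (t + 1) := by
    rw [hδ, hδ, hrec, smul_add_one_sub_smul_sub _ _ (G t)]
    exact norm_smul_sub_sq_le _ _ (hβ _).1 (hβ _).2 hβmax0 hβmax1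
  have hc (t : ℕ) : c t ≤ (2 * M) ^ 2 := by
    have hβ1 : β t ^ 2 ≤ 1 := pow_le_one₀ (hβ t).1 (by linarith [(hβ t).2])
    have hΔG : ‖G t - G (t - 1)‖ ≤ 2 * M :=
      (norm_sub_le _ _).trans (by linarith [hG t, hG (t - 1)])
    calc c t ≤ 1 * (2 * M) ^ 2 := mul_le_mul hβ1 (by gcongr) (by positivity) zero_le_one
      _ = _ := one_mul _
  have hc0 (t : ℕ) : 0 ≤ c t := by positivity
  have hlimsup_c : 0 ≤ limsup (timeAverage c) atTop :=
    le_limsup_of_frequently_le (Frequently.of_forall (timeAverage_nonneg hc0))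
      (isBoundedUnder_of ⟨_, timeAverage_le hc (sq_nonneg _)⟩)
  calc limsup (timeAverage fun t => ‖δ t‖ ^ 2) atTop
      ≤ (1 - βmax)⁻¹ / (1 - βmax) * limsup (timeAverage c) atTop :=
        limsup_timeAverage_le_of_le_mul_add hβmax0.le hβmax1 (inv_nonneg.2 h1b.le)
          (fun t => sq_nonneg _) hc0 hc hstep
    _ ≤ 2 / (1 - βmax) ^ 2 * limsup (timeAverage c) atTop := by
        rw [inv_div_left, ← sq, inv_eq_one_div]
        gcongr
        norm_num

/-- Theorem 1 (Tracking Error Upper Bound): for the adaptive-momentum updates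
`m_t = β_t m_{t-1} + (1-β_t) G_t` with `β_t ∈ [0, β_max]`, `β_max < 1`,
tracking error `δ_t = m_t - G_t`, and uniformly bounded gradients, with
`C = 2/(1-β_max)²`,
`limsup_T (1/T) Σ_{t=1}^T ‖δ_t‖² ≤ C · limsup_T (1/T) Σ_{t=1}^T β_t² ‖G_t - G_{t-1}‖²`. -/
theorem tracking_error_upper_bound {d : ℕ}
    (G m δ : ℕ → EuclideanSpace ℝ (Fin d)) (β : ℕ → ℝ) (βmax : ℝ)
    (hβmax0 : 0 < βmax) (hβmax1 : βmax < 1)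
    (hβ : ∀ t : ℕ, β t ∈ Set.Icc (0 : ℝ) βmax)
    (hrec : ∀ t : ℕ, m (t + 1) = β (t + 1) • m t + (1 - β (t + 1)) • G (t + 1))
    (hδ : ∀ t : ℕ, δ t = m t - G t)
    (M : ℝ) (hM : 0 < M) (hG : ∀ t : ℕ, ‖G t‖ ≤ M) (hm0 : ‖m 0‖ ≤ M) :
    limsup (fun T : ℕ => (1 / (T : ℝ)) * ∑ t ∈ Finset.Icc 1 T, ‖δ t‖ ^ 2) atTop ≤
      (2 / (1 - βmax) ^ 2) *
        limsup (fun T : ℕ =>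
          (1 / (T : ℝ)) * ∑ t ∈ Finset.Icc 1 T, (β t) ^ 2 * ‖G t - G (t - 1)‖ ^ 2) atTop :=
  tracking_error_upper_bound_general G m δ β βmax hβmax0 hβmax1 hβ hrec hδ M hG
end

section
/- (Per-step descent inequality) Let F : ℝ^d → ℝ be differentiable with L-Lipschitz gradient (L > 0). Let θ, m, G, δ ∈ ℝ^d with m = G + δ and ‖G - ∇F(θ)‖² ≤ ε for some ε ≥ 0. Let H be a diagonal d×d matrix with diagonal entries in [h_min, h_max], 0 < h_min ≤ h_max, and let η̃ > 0 satisfy η̃ ≤ h_min²/(4 L h_max). Set θ⁺ = θ - η̃ H^{-1} m. Then there exists a constant c₂ > 0 depending only on L, h_min, and h_max such that F(θ⁺) ≤ F(θ) - (η̃/(4 h_max)) ‖∇F(θ)‖² + c₂ · η̃ · (‖δ‖² + ε). -/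
/-!
The descent lemma bounds `F θ⁺ - F θ` by `⟪∇F θ, u⟫ + L ‖u‖²` with `u = θ⁺ - θ`. Since the
preconditioner is diagonal, this quadratic splits into coordinates, where
`u i = -η̃ k (g i + e i)` with `g = ∇F θ`, `e = G - g + δ` and `k = (H i)⁻¹ ∈ [1/h_max, 1/h_min]`.
The step-size bound gives `L η̃ k² ≤ 1/(4 h_max)`, so a Young inequality in each coordinate leaves
`-(η̃/(4 h_max)) (g i)² + O(η̃) (e i)²`; finally `‖e‖² ≤ 2 (‖δ‖² + ε)`.
-/

open scoped RealInnerProductSpace Gradient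

theorem norm_image_sub_sub_fderiv_le_of_lipschitz_fderiv
    {E F : Type*} [NormedAddCommGroup E] [NormedSpace ℝ E] [NormedAddCommGroup F]
    [NormedSpace ℝ F] {f : E → F} {L : ℝ} (hf : Differentiable ℝ f) (hL : 0 ≤ L)
    (hlip : ∀ x y, ‖fderiv ℝ f x - fderiv ℝ f y‖ ≤ L * ‖x - y‖) (x y : E) :
    ‖f y - f x - fderiv ℝ f x (y - x)‖ ≤ L * ‖y - x‖ ^ 2 := by
  have bound : ∀ z ∈ segment ℝ x y, ‖fderiv ℝ f z - fderiv ℝ f x‖ ≤ L * ‖y - x‖ := by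
    intro z hz
    have hzx : ‖z - x‖ ≤ ‖y - x‖ := by
      simpa only [dist_eq_norm, norm_sub_rev x] using
        (le_add_of_nonneg_right dist_nonneg).trans_eq (dist_add_dist_of_mem_segment hz)
    exact (hlip z x).trans (mul_le_mul_of_nonneg_left hzx hL)
  calc ‖f y - f x - fderiv ℝ f x (y - x)‖ ≤ L * ‖y - x‖ * ‖y - x‖ :=
        (convex_segment x y).norm_image_sub_le_of_norm_fderiv_le' (fun z _ ↦ hf z) bound
          (left_mem_segment ℝ x y) (right_mem_segment ℝ x y)
    _ = L * ‖y - x‖ ^ 2 := by ring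

theorem image_le_add_inner_gradient_add_of_lipschitz_gradient
    {E : Type*} [NormedAddCommGroup E] [InnerProductSpace ℝ E] [CompleteSpace E]
    {f : E → ℝ} {L : ℝ} (hf : Differentiable ℝ f) (hL : 0 ≤ L)
    (hlip : ∀ x y, ‖∇ f x - ∇ f y‖ ≤ L * ‖x - y‖) (x y : E) :
    f y ≤ f x + ⟪∇ f x, y - x⟫ + L * ‖y - x‖ ^ 2 := by
  have hfderiv : ∀ z, fderiv ℝ f z = InnerProductSpace.toDual ℝ E (∇ f z) := fun z ↦
    toDual_gradient.symm
  have hlip' : ∀ x y, ‖fderiv ℝ f x - fderiv ℝ f y‖ ≤ L * ‖x - y‖ := fun x y ↦ by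
    rw [hfderiv, hfderiv, ← map_sub, LinearIsometryEquiv.norm_map]
    exact hlip x y
  have h := norm_image_sub_sub_fderiv_le_of_lipschitz_fderiv hf hL hlip' x y
  rw [hfderiv, InnerProductSpace.toDual_apply_apply, Real.norm_eq_abs] at h
  linarith [le_abs_self (f y - f x - ⟪∇ f x, y - x⟫)]

/-- The difference of the two sides is
`k (a/2 + b)² + 3/4 (k - μ) a² + (c - k) b² + (μ/4 - t) (a + b)² + μ/4 (a - b)²`. -/
theorem neg_mul_mul_add_add_mul_sq_le {a b k t μ c : ℝ} (hμ : 0 ≤ μ) (hμk : μ ≤ k) (hkc : k ≤ c)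
    (ht : t ≤ μ / 4) :
    -(k * a * (a + b)) + t * (a + b) ^ 2 ≤ -(μ / 4 * a ^ 2) + (c + μ / 2) * b ^ 2 := by
  nlinarith [mul_nonneg (hμ.trans hμk) (sq_nonneg (a / 2 + b)),
    mul_nonneg (sub_nonneg.2 hμk) (sq_nonneg a), mul_nonneg (sub_nonneg.2 hkc) (sq_nonneg b),
    mul_nonneg (sub_nonneg.2 ht) (sq_nonneg (a + b)), mul_nonneg hμ (sq_nonneg (a - b))]

theorem inner_add_mul_norm_sq_le_of_diagonal_step {ι : Type*} [Fintype ι]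
    {g e u : EuclideanSpace ℝ ι} {k : ι → ℝ} {s L μ c : ℝ} (hs : 0 ≤ s) (hμ : 0 ≤ μ)
    (hk : ∀ i, k i ∈ Set.Icc μ c) (hLs : ∀ i, L * s * k i ^ 2 ≤ μ / 4)
    (hu : ∀ i, u i = -(s * k i * (g i + e i))) :
    ⟪g, u⟫ + L * ‖u‖ ^ 2 ≤ s * (-(μ / 4 * ‖g‖ ^ 2) + (c + μ / 2) * ‖e‖ ^ 2) := by
  simp only [PiLp.inner_apply, RCLike.inner_apply, conj_trivial, EuclideanSpace.real_norm_sq_eq,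
    Finset.mul_sum, ← Finset.sum_add_distrib, ← Finset.sum_neg_distrib]
  refine Finset.sum_le_sum fun i _ ↦ ?_
  have hi := neg_mul_mul_add_add_mul_sq_le (a := g i) (b := e i) hμ (hk i).1 (hk i).2 (hLs i)
  calc _ = s * (-(k i * g i * (g i + e i)) + L * s * k i ^ 2 * (g i + e i) ^ 2) := by
        rw [hu]; ring
    _ ≤ _ := mul_le_mul_of_nonneg_left hi hs

/-- Per-step descent inequality: for `F` differentiable with `L`-Lipschitz
gradient, a preconditioned momentum step `θ⁺_i = θ_i - η̃ (H_i)⁻¹ m_i` with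
`m = G + δ`, `‖G - ∇F(θ)‖² ≤ ε`, diagonal entries `H_i ∈ [h_min, h_max]`, and
`η̃ ≤ h_min²/(4 L h_max)`, satisfies
`F(θ⁺) ≤ F(θ) - (η̃/(4 h_max)) ‖∇F(θ)‖² + c₂ η̃ (‖δ‖² + ε)` for some constant
`c₂ > 0` depending only on `L, h_min, h_max`. -/
theorem per_step_descent
    (L hmin hmax : ℝ) (hL : 0 < L) (hhmin : 0 < hmin) (hhm : hmin ≤ hmax) :
    ∃ c₂ > (0 : ℝ),
      ∀ (d : ℕ) (F : EuclideanSpace ℝ (Fin d) → ℝ)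
        (θ θplus m G δ : EuclideanSpace ℝ (Fin d))
        (H : Fin d → ℝ) (ε ηt : ℝ),
        Differentiable ℝ F →
        (∀ x y : EuclideanSpace ℝ (Fin d),
          ‖gradient F x - gradient F y‖ ≤ L * ‖x - y‖) →
        m = G + δ →
        0 ≤ ε →
        ‖G - gradient F θ‖ ^ 2 ≤ ε →
        (∀ i : Fin d, H i ∈ Set.Icc hmin hmax) →
        0 < ηt →
        ηt ≤ hmin ^ 2 / (4 * L * hmax) →
        (∀ i : Fin d, θplus i = θ i - ηt * (H i)⁻¹ * m i) →
        F θplus ≤ F θ - (ηt / (4 * hmax)) * ‖gradient F θ‖ ^ 2 +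
          c₂ * ηt * (‖δ‖ ^ 2 + ε) := by
  have hhmax : 0 < hmax := hhmin.trans_le hhm
  refine ⟨2 * (hmin⁻¹ + hmax⁻¹ / 2), by positivity, ?_⟩
  intro d F θ θplus m G δ H ε ηt hF hlip hm _ hG hH hηt hηle hstep
  set g := ∇ F θ
  have hk : ∀ i, (H i)⁻¹ ∈ Set.Icc hmax⁻¹ hmin⁻¹ := fun i ↦
    ⟨inv_anti₀ (hhmin.trans_le (hH i).1) (hH i).2, inv_anti₀ hhmin (hH i).1⟩
  have hLs : ∀ i, L * ηt * (H i)⁻¹ ^ 2 ≤ hmax⁻¹ / 4 := fun i ↦ calc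
    L * ηt * (H i)⁻¹ ^ 2 ≤ L * (hmin ^ 2 / (4 * L * hmax)) * hmin⁻¹ ^ 2 := by
      gcongr
      exacts [(inv_pos.2 hhmax).le.trans (hk i).1, (hH i).1]
    _ = hmax⁻¹ / 4 := by field_simp
  have hu : ∀ i, (θplus - θ) i = -(ηt * (H i)⁻¹ * (g i + (G - g + δ) i)) := fun i ↦ by
    simp only [PiLp.sub_apply, PiLp.add_apply, hstep, hm]
    ring
  have herr : ‖G - g + δ‖ ^ 2 ≤ 2 * (‖δ‖ ^ 2 + ε) := calc
    ‖G - g + δ‖ ^ 2 ≤ (‖G - g‖ + ‖δ‖) ^ 2 := by gcongr; exact norm_add_le _ _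
    _ ≤ 2 * (‖G - g‖ ^ 2 + ‖δ‖ ^ 2) := add_sq_le
    _ ≤ 2 * (‖δ‖ ^ 2 + ε) := by linarith
  calc F θplus ≤ F θ + (⟪g, θplus - θ⟫ + L * ‖θplus - θ‖ ^ 2) := by
        rw [← add_assoc]
        exact image_le_add_inner_gradient_add_of_lipschitz_gradient hF hL.le hlip θ θplus
    _ ≤ F θ + ηt * (-(hmax⁻¹ / 4 * ‖g‖ ^ 2) + (hmin⁻¹ + hmax⁻¹ / 2) * ‖G - g + δ‖ ^ 2) := by
        gcongr
        exact inner_add_mul_norm_sq_le_of_diagonal_step hηt.le (inv_nonneg.2 hhmax.le) hk hLs hu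
    _ ≤ F θ + ηt * (-(hmax⁻¹ / 4 * ‖g‖ ^ 2) + (hmin⁻¹ + hmax⁻¹ / 2) * (2 * (‖δ‖ ^ 2 + ε))) := by
        gcongr
    _ = _ := by ring
end
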